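/- arXiv:1908.04458 — 3 statements merged into one kernel-verified Lean document; each statement's English description precedes it below -/
import Mathlib

section
/- Let f(t) = ∑_α c_α t^α be a power series in n complex variables convergent on a polydisk around the origin, with c_β ≠ 0 for the ≻-minimal multi-index β among those with nonzero coefficient, where ≻ is the colexicographic order. Suppose t(m) ∈ ℂⁿ is a sequence with all coordinates nonzero, t(m) → 0, and for all i < j and all positive integers p, |t_j(m)| = o(|t_i(m)|^p). Then f(t(m)) ≠ 0 for all sufficiently large m. -/
/-!
Fix `0 < ρ < r` and put `b_i = ‖t_i‖ / ρ`, so that `‖c_α t^α‖ = ‖c_α‖ ρ^|α| b^α` and the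
convergent series `S = ∑ ‖c_α‖ ρ^|α|` majorises the coefficients. Superpolynomial separation
gives, eventually, `b_k ≤ ε ∏_{i<k} b_i^{β_i}` for every `k`; since all `b_i ≤ 1`, this forces
`b^α ≤ ε b^β` for every `α` colexicographically above `β`. The terms `α ≠ β` then sum to at most
`ε S b^β`, which is smaller than the leading term `‖c_β‖ ρ^|β| b^β` once `ε S < ‖c_β‖ ρ^|β|`.
-/

open Filter Asymptotics Finset Topology

theorem Fintype.prod_eq_prod_lt_mul_mul_prod_gt {ι M : Type*} [Fintype ι] [LinearOrder ι]
    [CommMonoid M] (f : ι → M) (k : ι) :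
    ∏ i, f i = (∏ i with i < k, f i) * (f k * ∏ i with k < i, f i) := by
  rw [← prod_filter_mul_prod_filter_not univ (· < k),
    ← mul_prod_erase _ _ (by simp : k ∈ ({i | ¬ i < k} : Finset ι))]
  congr 3
  ext i
  simp only [mem_erase, mem_filter, mem_univ, true_and, not_lt]
  rw [lt_iff_le_and_ne, and_comm, ne_comm]

theorem prod_pow_le_mul_prod_pow_of_colex {ι R : Type*} [Fintype ι] [LinearOrder ι]
    [CommSemiring R] [LinearOrder R] [IsStrictOrderedRing R] {b : ι → R}
    (hb0 : ∀ i, 0 ≤ b i) (hb1 : ∀ i, b i ≤ 1) {α β : ι → ℕ} {k : ι} (hk : β k < α k)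
    (heq : ∀ l, k < l → α l = β l) {ε : R} (hε : b k ≤ ε * ∏ i with i < k, b i ^ β i) :
    ∏ i, b i ^ α i ≤ ε * ∏ i, b i ^ β i := by
  have htail : ∏ i with k < i, b i ^ α i = ∏ i with k < i, b i ^ β i :=
    prod_congr rfl fun i hi => by rw [heq i (mem_filter.1 hi).2]
  have hhead : ∏ i with i < k, b i ^ α i ≤ 1 :=
    prod_le_one (fun i _ => pow_nonneg (hb0 i) _) fun i _ => pow_le_one₀ (hb0 i) (hb1 i)
  have hk' : b k ^ α k ≤ b k * b k ^ β k := by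
    rw [← pow_succ']; exact pow_le_pow_of_le_one (hb0 k) (hb1 k) hk
  have hgt : 0 ≤ ∏ i with k < i, b i ^ β i := prod_nonneg fun i _ => pow_nonneg (hb0 i) _
  have hrest : 0 ≤ b k ^ β k * ∏ i with k < i, b i ^ β i := mul_nonneg (pow_nonneg (hb0 k) _) hgt
  rw [Fintype.prod_eq_prod_lt_mul_mul_prod_gt _ k, Fintype.prod_eq_prod_lt_mul_mul_prod_gt _ k,
    htail]
  calc (∏ i with i < k, b i ^ α i) * (b k ^ α k * ∏ i with k < i, b i ^ β i)
      ≤ 1 * (b k * (b k ^ β k * ∏ i with k < i, b i ^ β i)) := by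
        rw [← mul_assoc (b k)]
        exact mul_le_mul hhead (mul_le_mul_of_nonneg_right hk' hgt)
          (mul_nonneg (pow_nonneg (hb0 k) _) hgt) zero_le_one
    _ ≤ ε * (∏ i with i < k, b i ^ β i) * (b k ^ β k * ∏ i with k < i, b i ^ β i) := by
        rw [one_mul]; exact mul_le_mul_of_nonneg_right hε hrest
    _ = _ := by ring

section Separated

variable {ι T : Type*} [LinearOrder ι] {l : Filter T} {b : T → ι → ℝ}

theorem eventually_le_of_isLittleO_of_le (hb0 : ∀ m i, 0 ≤ b m i)
    (hsep : ∀ i j, i < j → ∀ p : ℕ, 1 ≤ p → (fun m => b m j) =o[l] fun m => b m i ^ p)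
    {i j : ι} (hij : i ≤ j) : ∀ᶠ m in l, b m j ≤ b m i := by
  rcases hij.eq_or_lt with rfl | hij
  · exact .of_forall fun m => le_rfl
  · filter_upwards [(hsep i j hij 1 le_rfl).def one_pos] with m hm
    simpa [abs_of_nonneg (hb0 m _)] using hm

theorem eventually_le_mul_prod_pow_of_isLittleO [Fintype ι] (hb0 : ∀ m i, 0 ≤ b m i)
    (hlim : ∀ i, Tendsto (fun m => b m i) l (𝓝 0))
    (hsep : ∀ i j, i < j → ∀ p : ℕ, 1 ≤ p → (fun m => b m j) =o[l] fun m => b m i ^ p)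
    (β : ι → ℕ) (k : ι) {ε : ℝ} (hε : 0 < ε) :
    ∀ᶠ m in l, b m k ≤ ε * ∏ i with i < k, b m i ^ β i := by
  rcases ({i | i < k} : Finset ι).eq_empty_or_nonempty with hempty | hne
  · simpa [hempty] using (hlim k).eventually_le_const hε
  set j := max' _ hne
  have hjk : j < k := (mem_filter.1 (max'_mem _ hne)).2
  set B := ∑ i with i < k, β i
  have hkj : ∀ᶠ m in l, b m k ≤ ε * b m j ^ (B + 1) := by
    filter_upwards [(hsep j k hjk (B + 1) le_add_self).def hε] with m hm
    simpa [abs_of_nonneg (hb0 m _)] using hm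
  have hj1 : ∀ᶠ m in l, b m j ≤ 1 := (hlim j).eventually_le_const one_pos
  have hji : ∀ᶠ m in l, ∀ i ∈ ({i | i < k} : Finset ι), b m j ≤ b m i :=
    (eventually_all_finset _).2 fun i hi =>
      eventually_le_of_isLittleO_of_le hb0 hsep (le_max' _ i hi)
  filter_upwards [hkj, hj1, hji] with m hkj hj1 hji
  calc b m k ≤ ε * (b m j ^ B * b m j) := by rwa [← pow_succ]
    _ ≤ ε * (b m j ^ B * 1) := by gcongr; exact pow_nonneg (hb0 m j) B
    _ = ε * ∏ i with i < k, b m j ^ β i := by rw [mul_one, prod_pow_eq_pow_sum]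
    _ ≤ ε * ∏ i with i < k, b m i ^ β i :=
        mul_le_mul_of_nonneg_left (prod_le_prod (fun i _ => pow_nonneg (hb0 m j) _)
          fun i hi => pow_le_pow_left₀ (hb0 m j) (hji i hi) _) hε.le

theorem eventually_prod_pow_le_mul_prod_pow_of_isLittleO [Fintype ι] (hb0 : ∀ m i, 0 ≤ b m i)
    (hlim : ∀ i, Tendsto (fun m => b m i) l (𝓝 0))
    (hsep : ∀ i j, i < j → ∀ p : ℕ, 1 ≤ p → (fun m => b m j) =o[l] fun m => b m i ^ p)
    (β : ι → ℕ) {ε : ℝ} (hε : 0 < ε) :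
    ∀ᶠ m in l, ∀ (α : ι → ℕ) (k : ι), β k < α k → (∀ j, k < j → α j = β j) →
      ∏ i, b m i ^ α i ≤ ε * ∏ i, b m i ^ β i := by
  have hdom := eventually_all.2 fun k =>
    eventually_le_mul_prod_pow_of_isLittleO hb0 hlim hsep β k hε
  have hsmall := eventually_all.2 fun i => (hlim i).eventually_le_const one_pos
  filter_upwards [hdom, hsmall] with m hdom hsmall α k hk heq
  exact prod_pow_le_mul_prod_pow_of_colex (hb0 m) hsmall hk heq (hdom k)

theorem Asymptotics.IsLittleO.div_const_pow {f g : T → ℝ} {p : ℕ}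
    (h : f =o[l] fun m => g m ^ p) {ρ : ℝ} (hρ : ρ ≠ 0) :
    (fun m => f m / ρ) =o[l] fun m => (g m / ρ) ^ p := by
  simp only [div_pow]
  simp only [div_eq_inv_mul]
  exact (isLittleO_const_mul_right_iff (inv_ne_zero (pow_ne_zero _ hρ))).2 (h.const_mul_left _)

end Separated

theorem tsum_ne_zero_of_norm_le_of_tsum_lt {ι E : Type*} [NormedAddCommGroup E] {u : ι → E}
    {w : ι → ℝ} (hu : Summable u) (hw : Summable w) (β : ι) (hle : ∀ α ≠ β, ‖u α‖ ≤ w α)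
    (hwβ : 0 ≤ w β) (hlt : ∑' α, w α < ‖u β‖) : ∑' α, u α ≠ 0 := by
  classical
  have htail : ‖∑' α, if α = β then 0 else u α‖ ≤ ∑' α, w α :=
    tsum_of_norm_bounded hw.hasSum fun α => by
      split_ifs with h
      · simpa [h] using hwβ
      · exact hle α h
  rw [hu.tsum_eq_add_tsum_ite β]
  intro hsum
  rw [eq_neg_of_add_eq_zero_left hsum, norm_neg] at hlt
  linarith

theorem norm_mul_prod_pow_eq {ι : Type*} [Fintype ι] (c : ℂ) (z : ι → ℂ) (α : ι → ℕ) {ρ : ℝ}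
    (hρ : 0 < ρ) :
    ‖c * ∏ i, z i ^ α i‖ = ‖c * ∏ i, (ρ : ℂ) ^ α i‖ * ∏ i, (‖z i‖ / ρ) ^ α i := by
  simp only [norm_mul, norm_prod, norm_pow, Complex.norm_real, Real.norm_of_nonneg hρ.le,
    div_pow, prod_div_distrib]
  field_simp

theorem tsum_mul_prod_pow_ne_zero {ι : Type*} [Fintype ι] {c : (ι → ℕ) → ℂ} {z : ι → ℂ}
    {ρ ε : ℝ} (hρ : 0 < ρ) (hε : 0 ≤ ε) (hz : ∀ i, z i ≠ 0)
    (hsum : Summable fun α => c α * ∏ i, z i ^ α i)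
    (hS : Summable fun α => ‖c α * ∏ i, (ρ : ℂ) ^ α i‖) (β : ι → ℕ)
    (hle : ∀ α ≠ β, c α ≠ 0 → ∏ i, (‖z i‖ / ρ) ^ α i ≤ ε * ∏ i, (‖z i‖ / ρ) ^ β i)
    (hεS : (∑' α, ‖c α * ∏ i, (ρ : ℂ) ^ α i‖) * ε < ‖c β * ∏ i, (ρ : ℂ) ^ β i‖) :
    ∑' α, c α * ∏ i, z i ^ α i ≠ 0 := by
  set P := ∏ i, (‖z i‖ / ρ) ^ β i
  have hP : 0 < P := prod_pos fun i _ => pow_pos (div_pos (norm_pos_iff.2 (hz i)) hρ) _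
  refine tsum_ne_zero_of_norm_le_of_tsum_lt (w := fun α => ε * P * ‖c α * ∏ i, (ρ : ℂ) ^ α i‖)
    hsum (hS.mul_left _) β (fun α hα => ?_) (by positivity) ?_
  · rw [norm_mul_prod_pow_eq _ _ _ hρ]
    rcases eq_or_ne (c α) 0 with hc | hc
    · simp [hc]
    calc _ ≤ ‖c α * ∏ i, (ρ : ℂ) ^ α i‖ * (ε * P) := by gcongr; exact hle α hα hc
      _ = _ := by ring
  · rw [tsum_mul_left, norm_mul_prod_pow_eq _ _ _ hρ]
    calc ε * P * ∑' α, ‖c α * ∏ i, (ρ : ℂ) ^ α i‖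
        = (∑' α, ‖c α * ∏ i, (ρ : ℂ) ^ α i‖) * ε * P := by ring
      _ < ‖c β * ∏ i, (ρ : ℂ) ^ β i‖ * P := by gcongr

theorem leading_term_dominates_general (n : ℕ) (c : (Fin n → ℕ) → ℂ) (r : ℝ) (hr : 0 < r)
    (hconv : ∀ t : Fin n → ℂ, (∀ i, ‖t i‖ < r) →
      Summable (fun α : Fin n → ℕ => c α * ∏ i, t i ^ α i))
    (β : Fin n → ℕ) (hβ : c β ≠ 0)
    (hmin : ∀ α : Fin n → ℕ, c α ≠ 0 → α = β ∨
      ∃ k : Fin n, β k < α k ∧ ∀ l : Fin n, k < l → α l = β l)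
    (t : ℕ → Fin n → ℂ) (ht0 : ∀ m i, t m i ≠ 0)
    (htlim : Tendsto (fun m => t m) atTop (nhds 0))
    (hsep : ∀ i j : Fin n, i < j → ∀ p : ℕ, 1 ≤ p →
      (fun m => ‖t m j‖) =o[atTop] fun m => ‖t m i‖ ^ p) :
    ∀ᶠ m in atTop, (∑' α : Fin n → ℕ, c α * ∏ i, t m i ^ α i) ≠ 0 := by
  set ρ := r / 2
  have hρ : 0 < ρ := half_pos hr
  have hS : Summable fun α => ‖c α * ∏ i, (ρ : ℂ) ^ α i‖ :=
    (hconv _ fun i => by simpa [ρ, abs_of_pos hr] using half_lt_self hr).norm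
  have hδ : 0 < ‖c β * ∏ i, (ρ : ℂ) ^ β i‖ := norm_pos_iff.2 <| mul_ne_zero hβ <|
    prod_ne_zero_iff.2 fun i _ => pow_ne_zero _ (Complex.ofReal_ne_zero.2 hρ.ne')
  obtain ⟨ε, hε, hεS⟩ := exists_pos_mul_lt hδ (∑' α, ‖c α * ∏ i, (ρ : ℂ) ^ α i‖)
  have ht_lim : ∀ i, Tendsto (fun m => ‖t m i‖) atTop (𝓝 0) := fun i => by
    simpa using (((continuous_apply i).tendsto 0).comp htlim).norm
  have hdom := eventually_prod_pow_le_mul_prod_pow_of_isLittleO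
    (b := fun m i => ‖t m i‖ / ρ) (fun m i => by positivity)
    (fun i => by simpa using (ht_lim i).div_const ρ)
    (fun i j hij p hp => (hsep i j hij p hp).div_const_pow hρ.ne') β hε
  have hsmall := eventually_all.2 fun i => (ht_lim i).eventually_lt_const hr
  filter_upwards [hdom, hsmall] with m hdom hsmall
  refine tsum_mul_prod_pow_ne_zero hρ hε.le (ht0 m) (hconv _ hsmall) hS β
    (fun α hα hc => ?_) hεS
  obtain ⟨k, hk, heq⟩ := (hmin α hc).resolve_left hα
  exact hdom α k hk heq

/-- Key analytic lemma: if `f(t) = ∑_α c_α t^α` converges (absolutely) on a polydisk,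
`β` is the colexicographically minimal multi-index with `c_β ≠ 0`, and `t(m) → 0` is a
sequence with nonzero coordinates whose magnitudes are superpolynomially separated
(`|t_j(m)| = o(|t_i(m)|^p)` for `i < j` and every `p ≥ 1`), then `f(t(m)) ≠ 0` for all
large `m`. -/
theorem leading_term_dominates (n : ℕ) (hn : 1 ≤ n) (c : (Fin n → ℕ) → ℂ) (r : ℝ) (hr : 0 < r)
    (hconv : ∀ t : Fin n → ℂ, (∀ i, ‖t i‖ < r) →
      Summable (fun α : Fin n → ℕ => c α * ∏ i, t i ^ α i))
    (β : Fin n → ℕ) (hβ : c β ≠ 0)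
    (hmin : ∀ α : Fin n → ℕ, c α ≠ 0 → α = β ∨
      ∃ k : Fin n, β k < α k ∧ ∀ l : Fin n, k < l → α l = β l)
    (t : ℕ → Fin n → ℂ) (ht0 : ∀ m i, t m i ≠ 0)
    (htlim : Tendsto (fun m => t m) atTop (nhds 0))
    (hsep : ∀ i j : Fin n, i < j → ∀ p : ℕ, 1 ≤ p →
      (fun m => ‖t m j‖) =o[atTop] fun m => ‖t m i‖ ^ p) :
    ∀ᶠ m in atTop, (∑' α : Fin n → ℕ, c α * ∏ i, t m i ^ α i) ≠ 0 :=
  leading_term_dominates_general n c r hr hconv β hβ hmin t ht0 htlim hsep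
end

section
/- Let β ∈ ℕⁿ be a multi-index and let (c_α) satisfy the Cauchy bound |c_α| ≤ M/r^{|α|}. For fixed 1 ≤ i ≤ n, define S_i(t) = ∑ c_α t^α, the sum over multi-indices α with α_k = β_k for all k > i and α_i > β_i. Then for t in a small enough polydisk with all coordinates nonzero, |S_i(t)| ≤ |t_i / (t₁^{β₁}⋯t_{i-1}^{β_{i-1}})| · |t^β| · C(t), where C(t) = ∑_α |c_{α + (0,…,0,β_i+1,β_{i+1},…,β_n)} t^α| is finite and bounded near the origin. -/
/-!
Every multi-index in the summation range of `S_i` dominates the shift `σ` (which adds `β_i + 1`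
at `i` and `β_k` at `k > i`), so `α ↦ α - σ` embeds that range into all multi-indices and
`t^α = t^σ · t^{α - σ}`. Hence `|S_i(t)| ≤ |t^σ| · C(t)`, and `|t^σ|` is the stated prefactor.
By the Cauchy bound, the terms of `C(t)` are at most `M / r^{|σ|}` times the terms of the
multi-geometric series `∏_k ∑_m (|t_k|/r)^m`, which gives `C(t) ≤ 2^n M / r^{|σ|}` on the
polydisk of radius `r/2`.
-/

open Finset

theorem sum_prod_pow_le_prod_inv_one_sub {ι : Type*} [Fintype ι] {x : ι → ℝ}
    (h0 : ∀ k, 0 ≤ x k) (h1 : ∀ k, x k < 1) (F : Finset (ι → ℕ)) :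
    ∑ γ ∈ F, ∏ k, x k ^ γ k ≤ ∏ k, (1 - x k)⁻¹ := by
  classical
  have hF : F ⊆ Fintype.piFinset fun k => F.image (· k) := fun γ hγ =>
    Fintype.mem_piFinset.2 fun k => mem_image_of_mem _ hγ
  calc ∑ γ ∈ F, ∏ k, x k ^ γ k
      ≤ ∑ γ ∈ Fintype.piFinset fun k => F.image (· k), ∏ k, x k ^ γ k :=
        sum_le_sum_of_subset_of_nonneg hF fun γ _ _ => prod_nonneg fun k _ => pow_nonneg (h0 k) _
    _ = ∏ k, ∑ m ∈ F.image (· k), x k ^ m := (prod_univ_sum _ _).symm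
    _ ≤ ∏ k, (1 - x k)⁻¹ := by
        refine prod_le_prod (fun k _ => sum_nonneg fun m _ => pow_nonneg (h0 k) m) fun k _ => ?_
        rw [← tsum_geometric_of_lt_one (h0 k) (h1 k)]
        exact (summable_geometric_of_lt_one (h0 k) (h1 k)).sum_le_tsum _
          fun m _ => pow_nonneg (h0 k) m

section CauchyBound

variable {𝕜 ι : Type*} [NormedField 𝕜] [Fintype ι] {c : (ι → ℕ) → 𝕜} {M r : ℝ}

theorem norm_coeff_add_mul_prod_pow_le (hc : ∀ α, ‖c α‖ ≤ M / r ^ ∑ k, α k)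
    (s γ : ι → ℕ) (t : ι → 𝕜) :
    ‖c (γ + s) * ∏ k, t k ^ γ k‖ ≤ M / r ^ (∑ k, s k) * ∏ k, (‖t k‖ / r) ^ γ k := by
  have hdeg : ∑ k, (γ + s) k = ∑ k, γ k + ∑ k, s k := sum_add_distrib
  have hgeom : ∏ k, (‖t k‖ / r) ^ γ k = (∏ k, ‖t k‖ ^ γ k) / r ^ ∑ k, γ k := by
    simp only [div_pow, prod_div_distrib, prod_pow_eq_pow_sum]
  rw [norm_mul, norm_prod, hgeom]
  simp only [norm_pow]
  calc ‖c (γ + s)‖ * ∏ k, ‖t k‖ ^ γ k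
      ≤ M / r ^ (∑ k, γ k + ∑ k, s k) * ∏ k, ‖t k‖ ^ γ k := by
        rw [← hdeg]; gcongr; exact hc _
    _ = M / r ^ (∑ k, s k) * ((∏ k, ‖t k‖ ^ γ k) / r ^ ∑ k, γ k) := by
        rw [pow_add]; ring

theorem sum_norm_coeff_add_mul_prod_pow_le (hr : 0 < r) (hc : ∀ α, ‖c α‖ ≤ M / r ^ ∑ k, α k)
    (s : ι → ℕ) {t : ι → 𝕜} (ht : ∀ k, ‖t k‖ ≤ r / 2) (F : Finset (ι → ℕ)) :
    ∑ γ ∈ F, ‖c (γ + s) * ∏ k, t k ^ γ k‖ ≤ M / r ^ (∑ k, s k) * 2 ^ Fintype.card ι := by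
  have hx0 : ∀ k, 0 ≤ ‖t k‖ / r := fun k => by positivity
  have hx : ∀ k, ‖t k‖ / r ≤ 1 / 2 := fun k => by
    rw [div_le_iff₀ hr]; linarith [ht k]
  have hC : 0 ≤ M / r ^ ∑ k, s k := (norm_nonneg _).trans (hc s)
  calc ∑ γ ∈ F, ‖c (γ + s) * ∏ k, t k ^ γ k‖
      ≤ ∑ γ ∈ F, M / r ^ (∑ k, s k) * ∏ k, (‖t k‖ / r) ^ γ k :=
        sum_le_sum fun γ _ => norm_coeff_add_mul_prod_pow_le hc s γ t
    _ = M / r ^ (∑ k, s k) * ∑ γ ∈ F, ∏ k, (‖t k‖ / r) ^ γ k := (mul_sum _ _ _).symm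
    _ ≤ M / r ^ (∑ k, s k) * ∏ k, (1 - ‖t k‖ / r)⁻¹ := by
        gcongr
        exact sum_prod_pow_le_prod_inv_one_sub hx0 (fun k => by linarith [hx k]) F
    _ ≤ M / r ^ (∑ k, s k) * ∏ _k : ι, (2 : ℝ) := by
        refine mul_le_mul_of_nonneg_left (prod_le_prod (fun k _ => inv_nonneg.2 (by linarith [hx k]))
          fun k _ => ?_) hC
        rw [inv_le_comm₀ (by linarith [hx k]) two_pos]; linarith [hx k]
    _ = M / r ^ (∑ k, s k) * 2 ^ Fintype.card ι := by rw [prod_const, card_univ]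

theorem summable_norm_coeff_add_mul_prod_pow (hr : 0 < r)
    (hc : ∀ α, ‖c α‖ ≤ M / r ^ ∑ k, α k) (s : ι → ℕ) {t : ι → 𝕜} (ht : ∀ k, ‖t k‖ ≤ r / 2) :
    Summable fun γ => ‖c (γ + s) * ∏ k, t k ^ γ k‖ :=
  summable_of_sum_le (fun _ => norm_nonneg _) (sum_norm_coeff_add_mul_prod_pow_le hr hc s ht)

theorem tsum_norm_coeff_add_mul_prod_pow_le (hr : 0 < r)
    (hc : ∀ α, ‖c α‖ ≤ M / r ^ ∑ k, α k) (s : ι → ℕ) {t : ι → 𝕜} (ht : ∀ k, ‖t k‖ ≤ r / 2) :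
    ∑' γ, ‖c (γ + s) * ∏ k, t k ^ γ k‖ ≤ M / r ^ (∑ k, s k) * 2 ^ Fintype.card ι :=
  (summable_norm_coeff_add_mul_prod_pow hr hc s ht).tsum_le_of_sum_le
    (sum_norm_coeff_add_mul_prod_pow_le hr hc s ht)

end CauchyBound

theorem norm_tsum_subtype_le_norm_prod_pow_mul_tsum {𝕜 ι : Type*} [NormedField 𝕜] [Fintype ι]
    (c : (ι → ℕ) → 𝕜) (t : ι → 𝕜) (s : ι → ℕ) {p : (ι → ℕ) → Prop}
    (hp : ∀ α, p α → s ≤ α) (hsum : Summable fun γ => ‖c (γ + s) * ∏ k, t k ^ γ k‖) :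
    ‖∑' α : {α // p α}, c α * ∏ k, t k ^ α.1 k‖ ≤
      ‖∏ k, t k ^ s k‖ * ∑' γ, ‖c (γ + s) * ∏ k, t k ^ γ k‖ := by
  set e : {α // p α} → ι → ℕ := fun α => α.1 - s
  have he : ∀ α, e α + s = α.1 := fun α => tsub_add_cancel_of_le (hp α.1 α.2)
  have he_inj : Function.Injective e := fun α α' h => Subtype.ext <| by rw [← he, ← he, h]
  have hterm : ∀ α : {α // p α}, ‖c α * ∏ k, t k ^ α.1 k‖ =
      ‖∏ k, t k ^ s k‖ * ‖c (e α + s) * ∏ k, t k ^ e α k‖ := fun α => by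
    conv_lhs => rw [← he α]
    simp only [Pi.add_apply, pow_add, prod_mul_distrib, norm_mul]
    ring
  have hsum' : Summable fun α : {α // p α} => ‖c (e α + s) * ∏ k, t k ^ e α k‖ :=
    hsum.comp_injective he_inj
  calc ‖∑' α : {α // p α}, c α * ∏ k, t k ^ α.1 k‖
      ≤ ∑' α : {α // p α}, ‖c α * ∏ k, t k ^ α.1 k‖ :=
        norm_tsum_le_tsum_norm <| by simpa only [hterm] using hsum'.mul_left _
    _ = ‖∏ k, t k ^ s k‖ * ∑' α : {α // p α}, ‖c (e α + s) * ∏ k, t k ^ e α k‖ := by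
        rw [← tsum_mul_left]; exact tsum_congr hterm
    _ ≤ ‖∏ k, t k ^ s k‖ * ∑' γ, ‖c (γ + s) * ∏ k, t k ^ γ k‖ := by
        gcongr
        exact hsum'.tsum_le_tsum_of_inj e he_inj (fun _ _ => norm_nonneg _) (fun _ => le_rfl) hsum

def tailShift {n : ℕ} (β : Fin n → ℕ) (i : Fin n) : Fin n → ℕ :=
  fun k => if k < i then 0 else if k = i then β i + 1 else β k

theorem tailShift_le {n : ℕ} {β α : Fin n → ℕ} {i : Fin n}
    (hα : (∀ k, i < k → α k = β k) ∧ β i < α i) : tailShift β i ≤ α := fun k => by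
  rcases lt_trichotomy k i with hk | rfl | hk
  · simp [tailShift, hk]
  · simpa [tailShift] using hα.2
  · simp [tailShift, hk.not_gt, hk.ne', hα.1 k hk]

theorem prod_pow_tailShift_mul {M : Type*} [CommMonoid M] {n : ℕ} (x : Fin n → M)
    (β : Fin n → ℕ) (i : Fin n) :
    (∏ k, x k ^ tailShift β i k) * ∏ k ∈ univ.filter (fun k => k < i), x k ^ β k =
      x i * ∏ k, x k ^ β k := by
  have hterm : ∀ k, x k ^ tailShift β i k * (if k < i then x k ^ β k else 1) =
      x k ^ β k * (if k = i then x k else 1) := fun k => by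
    rcases lt_trichotomy k i with hk | rfl | hk
    · simp [tailShift, hk, hk.ne]
    · simp [tailShift, pow_succ]
    · simp [tailShift, hk.not_gt, hk.ne']
  rw [prod_filter, ← prod_mul_distrib, prod_congr rfl fun k _ => hterm k, prod_mul_distrib,
    prod_ite_eq' univ i x, if_pos (mem_univ i), mul_comm]

theorem norm_prod_pow_tailShift {𝕜 : Type*} [NormedField 𝕜] {n : ℕ} {t : Fin n → 𝕜}
    {i : Fin n} (ht : ∀ k < i, t k ≠ 0) (β : Fin n → ℕ) :
    ‖∏ k, t k ^ tailShift β i k‖ =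
      ‖t i‖ / (∏ k ∈ univ.filter (fun k => k < i), ‖t k‖ ^ β k) * ‖∏ k, t k ^ β k‖ := by
  have hpos : 0 < ∏ k ∈ univ.filter (fun k => k < i), ‖t k‖ ^ β k :=
    prod_pos fun k hk => pow_pos (norm_pos_iff.2 (ht k (mem_filter.1 hk).2)) _
  rw [div_mul_eq_mul_div, eq_div_iff hpos.ne']
  simpa only [norm_mul, norm_prod, norm_pow] using congrArg norm (prod_pow_tailShift_mul t β i)

theorem reindexing_estimate_general (n : ℕ) (M r : ℝ) (hr : 0 < r)
    (c : (Fin n → ℕ) → ℂ)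
    (hc : ∀ α : Fin n → ℕ, norm (c α) ≤ M / r ^ (∑ k, α k))
    (β : Fin n → ℕ) (i : Fin n) :
    ∃ δ : ℝ, 0 < δ ∧ δ ≤ r ∧
      (∀ t : Fin n → ℂ, (∀ k, t k ≠ 0) → (∀ k, norm (t k) < δ) →
        norm (∑' α : {α : Fin n → ℕ // (∀ k, i < k → α k = β k) ∧ β i < α i},
            c α.1 * ∏ k, t k ^ α.1 k) ≤
          norm (t i) / (∏ k ∈ Finset.univ.filter (fun k => k < i),
              norm (t k) ^ β k) *
            norm (∏ k, t k ^ β k) *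
            ∑' α : Fin n → ℕ,
              norm
                (c (fun k => α k + if k < i then 0 else if k = i then β i + 1 else β k) *
                  ∏ k, t k ^ α k)) ∧
      ∃ B : ℝ, ∀ t : Fin n → ℂ, (∀ k, norm (t k) < δ) →
        (∑' α : Fin n → ℕ,
            norm
              (c (fun k => α k + if k < i then 0 else if k = i then β i + 1 else β k) *
                ∏ k, t k ^ α k)) ≤ B := by
  refine ⟨r / 2, by positivity, by linarith, fun t ht0 ht => ?_,
    M / r ^ (∑ k, tailShift β i k) * 2 ^ Fintype.card (Fin n), fun t ht => ?_⟩
  · rw [← norm_prod_pow_tailShift fun k _ => ht0 k]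
    exact norm_tsum_subtype_le_norm_prod_pow_mul_tsum c t (tailShift β i)
      (fun _ => tailShift_le) (summable_norm_coeff_add_mul_prod_pow hr hc _ fun k => (ht k).le)
  · exact tsum_norm_coeff_add_mul_prod_pow_le hr hc (tailShift β i) fun k => (ht k).le

/-- The re-indexing estimate: with the Cauchy bound `|c_α| ≤ M/r^{|α|}`, for fixed `i`
the partial sum `S_i(t)` over `{α : α_k = β_k for k > i, α_i > β_i}` satisfies
`|S_i(t)| ≤ |t_i / (t₁^{β₁}⋯t_{i-1}^{β_{i-1}})| · |t^β| · C(t)` on a small polydisk with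
nonzero coordinates, where `C(t) = ∑_α |c_{α+σ} t^α|` (with `σ` the shift adding `β_i+1`
at coordinate `i` and `β_k` at coordinates `k > i`) is bounded near the origin. -/
theorem reindexing_estimate (n : ℕ) (M r : ℝ) (hM : 0 < M) (hr : 0 < r)
    (c : (Fin n → ℕ) → ℂ)
    (hc : ∀ α : Fin n → ℕ, norm (c α) ≤ M / r ^ (∑ k, α k))
    (β : Fin n → ℕ) (i : Fin n) :
    ∃ δ : ℝ, 0 < δ ∧ δ ≤ r ∧
      (∀ t : Fin n → ℂ, (∀ k, t k ≠ 0) → (∀ k, norm (t k) < δ) →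
        norm (∑' α : {α : Fin n → ℕ // (∀ k, i < k → α k = β k) ∧ β i < α i},
            c α.1 * ∏ k, t k ^ α.1 k) ≤
          norm (t i) / (∏ k ∈ Finset.univ.filter (fun k => k < i),
              norm (t k) ^ β k) *
            norm (∏ k, t k ^ β k) *
            ∑' α : Fin n → ℕ,
              norm
                (c (fun k => α k + if k < i then 0 else if k = i then β i + 1 else β k) *
                  ∏ k, t k ^ α k)) ∧
      ∃ B : ℝ, ∀ t : Fin n → ℂ, (∀ k, norm (t k) < δ) →
        (∑' α : Fin n → ℕ,
            norm
              (c (fun k => α k + if k < i then 0 else if k = i then β i + 1 else β k) *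
                ∏ k, t k ^ α k)) ≤ B :=
  reindexing_estimate_general n M r hr c hc β i
end

section
/- Let n ≥ 1 and suppose t(m) ∈ ℂⁿ is a sequence with all coordinates nonzero such that for all i < j and every positive integer p, |t_j(m)| = o(|t_i(m)|^p), and |t_1(m)| → 0. Then for any fixed multi-indices α ≻ β (colexicographic order), |t(m)^α| = o(|t(m)^β|) as m → ∞. -/
open Filter Asymptotics Topology Finset

/-!
Split both monomials at the pivot `k` of the colexicographic comparison. The factors beyond `k`
coincide, the factors before `k` stay bounded because every coordinate tends to `0`, and the
surplus factor `t_k` is `o` of every monomial in the earlier coordinates: its `(c+1)`-st power,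
`c` the number of earlier coordinates, is `o` of the `(c+1)`-st power of that monomial, since `t_k`
beats each earlier coordinate raised to any power.
-/

variable {α ι 𝕜 : Type*} [NormedField 𝕜] {l : Filter α}

lemma Finset.prod_eq_prod_Iio_mul_mul_prod_Ioi {M : Type*} [CommMonoid M] [Fintype ι]
    [LinearOrder ι] [LocallyFiniteOrderBot ι] [LocallyFiniteOrderTop ι] (f : ι → M) (k : ι) :
    ∏ i, f i = (∏ i ∈ Iio k, f i) * f k * ∏ i ∈ Ioi k, f i := by
  rw [← prod_mul_prod_compl (Iic k), ← prod_Iio_mul_eq_prod_Iic]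
  congr 2
  ext i
  simp

lemma isBigO_pow_pow_of_tendsto_zero {f : α → 𝕜} (hf : Tendsto f l (𝓝 0)) {a b : ℕ}
    (hab : b ≤ a) : (fun x => f x ^ a) =O[l] fun x => f x ^ b := by
  have hbdd : (fun x => f x ^ (a - b)) =O[l] fun _ => (1 : 𝕜) := (hf.pow _).isBigO_one 𝕜
  simpa [← pow_add, Nat.add_sub_cancel' hab] using (isBigO_refl (fun x => f x ^ b) l).mul hbdd

lemma isLittleO_prod_pow_of_forall_isLittleO_pow {s : Finset ι} {g : α → 𝕜} {f : ι → α → 𝕜}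
    (hg : Tendsto g l (𝓝 0)) (h : ∀ i ∈ s, ∀ p : ℕ, g =o[l] fun x => f i x ^ p) (β : ι → ℕ) :
    g =o[l] fun x => ∏ i ∈ s, f i x ^ β i := by
  set c := #s + 1
  have hpow : (fun x => g x ^ c) =o[l] fun x => (∏ i ∈ s, f i x ^ β i) ^ c := by
    have hprod : (fun x => ∏ _i ∈ s, g x) =O[l] fun x => ∏ i ∈ s, f i x ^ (β i * c) :=
      IsBigO.finsetProd fun i hi => (h i hi _).isBigO
    refine (((isLittleO_one_iff 𝕜).2 hg).mul_isBigO hprod).congr (fun x => ?_) (fun x => ?_)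
    · simp [c, pow_succ']
    · simp [prod_pow, pow_mul]
  exact IsLittleO.of_pow (f := g) hpow (Nat.add_one_ne_zero _)

theorem isLittleO_prod_pow_of_colex_lt [Fintype ι] [LinearOrder ι] [LocallyFiniteOrderBot ι]
    [LocallyFiniteOrderTop ι]
    {t : α → ι → 𝕜} (htend : ∀ i, Tendsto (fun x => t x i) l (𝓝 0))
    (hsep : ∀ i j, i < j → ∀ p : ℕ, (fun x => t x j) =o[l] fun x => t x i ^ p)
    {a b : ι → ℕ} {k : ι} (hk : b k < a k) (heq : ∀ i, k < i → a i = b i) :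
    (fun x => ∏ i, t x i ^ a i) =o[l] fun x => ∏ i, t x i ^ b i := by
  have hlow : (fun x => ∏ i ∈ Iio k, t x i ^ a i) =O[l] fun _ => (1 : 𝕜) :=
    (tendsto_finsetProd _ fun i _ => (htend i).pow (a i)).isBigO_one 𝕜
  have hpivot : (fun x => t x k) =o[l] fun x => ∏ i ∈ Iio k, t x i ^ b i :=
    isLittleO_prod_pow_of_forall_isLittleO_pow (htend k) (fun i hi => hsep i k (mem_Iio.1 hi)) b
  have hmid : (fun x => t x k ^ a k) =o[l] fun x => t x k ^ b k * ∏ i ∈ Iio k, t x i ^ b i :=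
    (isBigO_pow_pow_of_tendsto_zero (htend k) hk).trans_isLittleO
      (by simpa only [pow_succ] using (isBigO_refl _ l).mul_isLittleO hpivot)
  have hhigh : (fun x => ∏ i ∈ Ioi k, t x i ^ a i) =O[l] fun x => ∏ i ∈ Ioi k, t x i ^ b i :=
    (isBigO_refl _ l).congr_left fun x => prod_congr rfl fun i hi => by rw [heq i (mem_Ioi.1 hi)]
  refine ((hlow.mul_isLittleO hmid).mul_isBigO hhigh).congr (fun x => ?_) (fun x => ?_)
  · rw [prod_eq_prod_Iio_mul_mul_prod_Ioi _ k]
  · rw [prod_eq_prod_Iio_mul_mul_prod_Ioi _ k]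
    ring

theorem monomial_domination_general (n : ℕ) (hn : 0 < n) (t : ℕ → Fin n → ℂ)
    (hsep : ∀ i j : Fin n, i < j → ∀ p : ℕ, 1 ≤ p →
      (fun m => ‖t m j‖) =o[atTop] fun m => ‖t m i‖ ^ p)
    (hfirst : Tendsto (fun m => ‖t m ⟨0, hn⟩‖) atTop (nhds 0)) :
    ∀ α β : Fin n → ℕ,
      (∃ k : Fin n, β k < α k ∧ ∀ l : Fin n, k < l → α l = β l) →
      (fun m => ‖∏ i, t m i ^ α i‖) =o[atTop]
        fun m => ‖∏ i, t m i ^ β i‖ := by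
  have hsep_pos : ∀ i j : Fin n, i < j → ∀ p : ℕ, 1 ≤ p →
      (fun m => t m j) =o[atTop] fun m => t m i ^ p := fun i j hij p hp => by
    simpa only [← norm_pow, isLittleO_norm_norm] using hsep i j hij p hp
  have htend : ∀ i, Tendsto (fun m => t m i) atTop (𝓝 0) := by
    intro i
    have hfirst' := tendsto_zero_iff_norm_tendsto_zero.2 hfirst
    obtain h | h := (show (⟨0, hn⟩ : Fin n) ≤ i from Nat.zero_le _).eq_or_lt
    · exact h ▸ hfirst'
    · exact (hsep_pos _ i h 1 le_rfl).isBigO.trans_tendsto (by simpa only [pow_one] using hfirst')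
  have hsep_all : ∀ i j : Fin n, i < j → ∀ p : ℕ,
      (fun m => t m j) =o[atTop] fun m => t m i ^ p := by
    rintro i j hij (_ | p)
    · simpa only [pow_zero] using (isLittleO_one_iff ℂ).2 (htend j)
    · exact hsep_pos i j hij _ p.succ_pos
  rintro α β ⟨k, hk, heq⟩
  exact (isLittleO_prod_pow_of_colex_lt htend hsep_all hk heq).norm_norm

/-- If the coordinates of a sequence `t(m) ∈ ℂⁿ` are nonzero, superpolynomially
separated (`|t_j(m)| = o(|t_i(m)|^p)` for `i < j`, `p ≥ 1`) and `|t_1(m)| → 0`, then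
for multi-indices `α ≻ β` in the colexicographic order, `|t(m)^α| = o(|t(m)^β|)`. -/
theorem monomial_domination (n : ℕ) (hn : 0 < n) (t : ℕ → Fin n → ℂ)
    (ht0 : ∀ m i, t m i ≠ 0)
    (hsep : ∀ i j : Fin n, i < j → ∀ p : ℕ, 1 ≤ p →
      (fun m => ‖t m j‖) =o[atTop] fun m => ‖t m i‖ ^ p)
    (hfirst : Tendsto (fun m => ‖t m ⟨0, hn⟩‖) atTop (nhds 0)) :
    ∀ α β : Fin n → ℕ,
      (∃ k : Fin n, β k < α k ∧ ∀ l : Fin n, k < l → α l = β l) →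
      (fun m => ‖∏ i, t m i ^ α i‖) =o[atTop]
        fun m => ‖∏ i, t m i ^ β i‖ :=
  monomial_domination_general n hn t hsep hfirst
end
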